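/- arXiv:1610.03705 — 3 statements merged into one kernel-verified Lean document; each statement's English description precedes it below -/
import Mathlib

section
/- For all integers m ≥ 1 and t ≥ 0, the number of vertices of the Koch network K_{m,t} equals 2(3m+1)^t + 1. -/
/-- The triangles of the Koch network `K_{m,t}`: at step `t+1`, each old triangle survives and
each (triangle, corner, group) creates a new triangle. -/
def KochTri (m : ℕ) : ℕ → Type
  | 0 => Unit
  | t+1 => KochTri m t ⊕ (KochTri m t × Fin 3 × Fin m)

/-- The vertices of the Koch network `K_{m,t}`: at step `t+1`, each (triangle, corner, group)
creates two new vertices. -/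
def KochVertex (m : ℕ) : ℕ → Type
  | 0 => Fin 3
  | t+1 => KochVertex m t ⊕ (KochTri m t × Fin 3 × Fin m × Fin 2)

/-- The three corner vertices of each triangle. -/
def KochCorner (m : ℕ) : ∀ t, KochTri m t → Fin 3 → KochVertex m t
  | 0, _, i => i
  | t+1, Sum.inl τ, i => Sum.inl (KochCorner m t τ i)
  | t+1, Sum.inr (τ, c, g), i =>
      ![Sum.inl (KochCorner m t τ c), Sum.inr (τ, c, g, 0), Sum.inr (τ, c, g, 1)] i

instance KochTri.instDecidableEq (m : ℕ) : ∀ t, DecidableEq (KochTri m t)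
  | 0 => inferInstanceAs (DecidableEq Unit)
  | t+1 =>
    letI := KochTri.instDecidableEq m t
    inferInstanceAs (DecidableEq (KochTri m t ⊕ (KochTri m t × Fin 3 × Fin m)))

instance KochVertex.instDecidableEq (m : ℕ) : ∀ t, DecidableEq (KochVertex m t)
  | 0 => inferInstanceAs (DecidableEq (Fin 3))
  | t+1 =>
    letI := KochVertex.instDecidableEq m t
    letI := KochTri.instDecidableEq m t
    inferInstanceAs (DecidableEq (KochVertex m t ⊕ (KochTri m t × Fin 3 × Fin m × Fin 2)))

instance KochTri.instFintype (m : ℕ) : ∀ t, Fintype (KochTri m t)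
  | 0 => inferInstanceAs (Fintype Unit)
  | t+1 =>
    letI := KochTri.instFintype m t
    inferInstanceAs (Fintype (KochTri m t ⊕ (KochTri m t × Fin 3 × Fin m)))

instance KochVertex.instFintype (m : ℕ) : ∀ t, Fintype (KochVertex m t)
  | 0 => inferInstanceAs (Fintype (Fin 3))
  | t+1 =>
    letI := KochVertex.instFintype m t
    letI := KochTri.instFintype m t
    inferInstanceAs (Fintype (KochVertex m t ⊕ (KochTri m t × Fin 3 × Fin m × Fin 2)))

/-- The Koch network `K_{m,t}`: two distinct vertices are adjacent iff they are corners of a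
common triangle. -/
def KochGraph (m t : ℕ) : SimpleGraph (KochVertex m t) where
  Adj u v := u ≠ v ∧ ∃ (τ : KochTri m t) (i j : Fin 3),
      KochCorner m t τ i = u ∧ KochCorner m t τ j = v
  symm := ⟨by rintro u v ⟨hne, τ, i, j, hi, hj⟩; exact ⟨hne.symm, τ, j, i, hj, hi⟩⟩
  loopless := ⟨by rintro u ⟨hne, -⟩; exact hne rfl⟩

instance (m t : ℕ) : DecidableRel (KochGraph m t).Adj := fun u v =>
  inferInstanceAs (Decidable (u ≠ v ∧ ∃ (τ : KochTri m t) (i j : Fin 3),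
      KochCorner m t τ i = u ∧ KochCorner m t τ j = v))

/-- The step at which a vertex of `K_{m,t}` was added (initial vertices are added at step 0). -/
def KochBirth (m : ℕ) : ∀ t, KochVertex m t → ℕ
  | 0, _ => 0
  | t+1, Sum.inl v => KochBirth m t v
  | t+1, Sum.inr _ => t+1

/-- The canonical inclusion of `K_{m,t}` into `K_{m,t+1}`. -/
def KochInl (m t : ℕ) (v : KochVertex m t) : KochVertex m (t+1) := Sum.inl v

/-- The other member of the group of two with which a (non-initial) vertex was added. -/
def KochSibling (m : ℕ) : ∀ t, KochVertex m t → KochVertex m t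
  | 0, v => v
  | t+1, Sum.inl v => Sum.inl (KochSibling m t v)
  | t+1, Sum.inr (τ, c, g, p) => Sum.inr (τ, c, g, if p = 0 then 1 else 0)

/-- The father vertex of a (non-initial) vertex: the existing vertex to which its group of two
was attached. -/
def KochFather (m : ℕ) : ∀ t, KochVertex m t → KochVertex m t
  | 0, v => v
  | t+1, Sum.inl v => Sum.inl (KochFather m t v)
  | t+1, Sum.inr (τ, c, _, _) => Sum.inl (KochCorner m t τ c)

/-! Each step keeps every triangle and attaches `3m` new ones to it, together with `6m` new
vertices, so there are `(3m+1)^t` triangles and the vertex count grows by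
`6m(3m+1)^t = 2(3m+1)^(t+1) - 2(3m+1)^t`. -/

theorem KochTri.card (m t : ℕ) : Fintype.card (KochTri m t) = (3 * m + 1) ^ t := by
  induction t with
  | zero => exact Fintype.card_unit
  | succ t ih =>
    change Fintype.card (KochTri m t ⊕ (KochTri m t × Fin 3 × Fin m)) = _
    simp only [Fintype.card_sum, Fintype.card_prod, Fintype.card_fin, ih]
    ring

theorem KochVertex.card_succ (m t : ℕ) :
    Fintype.card (KochVertex m (t + 1)) =
      Fintype.card (KochVertex m t) + 6 * m * Fintype.card (KochTri m t) := by
  change Fintype.card (KochVertex m t ⊕ (KochTri m t × Fin 3 × Fin m × Fin 2)) = _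
  simp only [Fintype.card_sum, Fintype.card_prod, Fintype.card_fin]
  ring

theorem koch_card_vertices_general (m t : ℕ) :
    Fintype.card (KochVertex m t) = 2 * (3 * m + 1) ^ t + 1 := by
  induction t with
  | zero => exact Fintype.card_fin 3
  | succ t ih =>
    rw [KochVertex.card_succ, ih, KochTri.card]
    ring

/-- For all integers m ≥ 1 and t ≥ 0, the number of vertices of the Koch network
`K_{m,t}` equals `2(3m+1)^t + 1`. -/
theorem koch_card_vertices (m t : ℕ) (hm : 1 ≤ m) :
    Fintype.card (KochVertex m t) = 2 * (3 * m + 1) ^ t + 1 :=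
  koch_card_vertices_general m t
end

section
/- For all integers m ≥ 1 and t ≥ 0, the number of triangles (sets of three mutually adjacent vertices) in the Koch network K_{m,t} equals (3m+1)^t. -/
/-!
The 3-cliques of `K_{m,t}` are exactly the corner sets of the triangles produced by the
construction. A vertex born at the last step is adjacent only to its father and its sibling, so a
3-clique containing it is the triangle it was born in; a 3-clique with no such vertex is a 3-clique
of `K_{m,t-1}`, which sits in `K_{m,t}` as an induced subgraph. Distinct construction triangles
have distinct corner sets, and each step turns every triangle into `3m + 1` of them.
-/

-- Lets `simp` see `KochVertex m (t+1)` as a sum type and use the `Sum` constructor lemmas.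
attribute [reducible] KochTri KochVertex

open Finset

namespace SimpleGraph

variable {α β : Type*} {G : SimpleGraph α} {H : SimpleGraph β} {n : ℕ}

theorem IsNClique.of_map_embedding (f : G ↪g H) {s : Finset α}
    (h : H.IsNClique n (s.map f.toEmbedding)) : G.IsNClique n s := by
  refine ⟨fun u hu v hv huv => ?_, by simpa using h.card_eq⟩
  exact f.map_adj_iff.mp (h.1 (mem_map_of_mem _ hu) (mem_map_of_mem _ hv) (f.injective.ne huv))

end SimpleGraph

namespace KochGraph

variable {m : ℕ}

theorem kochCorner_injective : ∀ {t} (τ : KochTri m t), Function.Injective (KochCorner m t τ)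
  | 0, _ => fun _ _ h => h
  | _ + 1, Sum.inl τ => fun _ _ h => kochCorner_injective τ (Sum.inl_injective h)
  | _ + 1, Sum.inr _ => by
      intro i j h
      fin_cases i <;> fin_cases j <;> simp_all [KochCorner]

def triangle {t : ℕ} (τ : KochTri m t) : Finset (KochVertex m t) :=
  univ.image (KochCorner m t τ)

theorem mem_triangle {t : ℕ} {τ : KochTri m t} {v : KochVertex m t} :
    v ∈ triangle τ ↔ ∃ i, KochCorner m t τ i = v := by
  simp [triangle]

theorem card_triangle {t : ℕ} (τ : KochTri m t) : #(triangle τ) = 3 := by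
  rw [triangle, card_image_of_injective _ (kochCorner_injective τ), card_univ, Fintype.card_fin]

theorem isNClique_triangle {t : ℕ} (τ : KochTri m t) :
    (KochGraph m t).IsNClique 3 (triangle τ) := by
  refine ⟨fun u hu v hv huv => ?_, card_triangle τ⟩
  obtain ⟨i, rfl⟩ := mem_triangle.mp hu
  obtain ⟨j, rfl⟩ := mem_triangle.mp hv
  exact ⟨huv, τ, i, j, rfl, rfl⟩

theorem adj_inl_iff {t : ℕ} {u v : KochVertex m t} :
    (KochGraph m (t+1)).Adj (Sum.inl u) (Sum.inl v) ↔ (KochGraph m t).Adj u v := by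
  constructor
  · rintro ⟨huv, σ | ⟨σ, c, g⟩, i, j, hi, hj⟩
    · simp only [KochCorner, Sum.inl.injEq] at hi hj
      exact ⟨fun h => huv (congrArg _ h), σ, i, j, hi, hj⟩
    · fin_cases i <;> fin_cases j <;> simp_all [KochCorner]
  · rintro ⟨huv, σ, i, j, rfl, rfl⟩
    exact ⟨fun h => huv (Sum.inl_injective h), Sum.inl σ, i, j, rfl, rfl⟩

def inlEmbedding (t : ℕ) : KochGraph m t ↪g KochGraph m (t+1) where
  toFun := KochInl m t
  inj' := Sum.inl_injective
  map_rel_iff' := adj_inl_iff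

theorem triangle_inl {t : ℕ} (τ : KochTri m t) :
    triangle (t := t + 1) (.inl τ) = (triangle τ).map (inlEmbedding t).toEmbedding := by
  rw [triangle, triangle, map_eq_image, image_image]
  rfl

theorem triangle_inr {t : ℕ} (τ : KochTri m t) (c : Fin 3) (g : Fin m) :
    triangle (t := t + 1) (.inr (τ, c, g)) =
      {Sum.inl (KochCorner m t τ c), Sum.inr (τ, c, g, 0), Sum.inr (τ, c, g, 1)} := by
  refine Finset.ext fun v => ?_
  rw [mem_triangle]
  simp only [mem_insert, mem_singleton]
  constructor
  · rintro ⟨i, rfl⟩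
    fin_cases i <;> simp [KochCorner]
  · rintro (rfl | rfl | rfl)
    exacts [⟨0, rfl⟩, ⟨1, rfl⟩, ⟨2, rfl⟩]

theorem mem_triangle_of_adj_inr {t : ℕ} {τ : KochTri m t} {c : Fin 3} {g : Fin m} {p : Fin 2}
    {w : KochVertex m (t+1)} (h : (KochGraph m (t+1)).Adj (Sum.inr (τ, c, g, p)) w) :
    w ∈ triangle (t := t + 1) (.inr (τ, c, g)) := by
  obtain ⟨-, σ | ⟨σ, c', g'⟩, i, j, hi, hj⟩ := h
  · simp [KochCorner] at hi
  · obtain ⟨rfl, rfl, rfl⟩ : σ = τ ∧ c' = c ∧ g' = g := by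
      fin_cases i <;> simp_all [KochCorner]
    exact mem_triangle.mpr ⟨j, hj⟩

theorem eq_triangle_of_inr_mem {t : ℕ} {s : Finset (KochVertex m (t+1))}
    (hs : (KochGraph m (t+1)).IsNClique 3 s) {τ : KochTri m t} {c : Fin 3} {g : Fin m}
    {p : Fin 2} (hp : Sum.inr (τ, c, g, p) ∈ s) :
    triangle (t := t + 1) (.inr (τ, c, g)) = s := by
  symm
  refine eq_of_subset_of_card_le (fun w hw => ?_) (by rw [card_triangle, hs.card_eq])
  by_cases hwp : w = Sum.inr (τ, c, g, p)
  · subst hwp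
    rw [triangle_inr]
    fin_cases p <;> simp
  · exact mem_triangle_of_adj_inr (hs.1 hp hw (Ne.symm hwp))

theorem exists_triangle_eq_of_isNClique :
    ∀ {t} {s : Finset (KochVertex m t)}, (KochGraph m t).IsNClique 3 s → ∃ τ, triangle τ = s
  | 0, s, hs =>
    ⟨(), (eq_of_subset_of_card_le (fun v _ => mem_triangle (τ := ()).mpr ⟨v, rfl⟩)
      (by rw [card_triangle, hs.card_eq])).symm⟩
  | t + 1, s, hs => by
    by_cases hold : s ⊆ univ.map (inlEmbedding (m := m) t).toEmbedding
    · obtain ⟨s', -, rfl⟩ := subset_map_iff.mp hold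
      obtain ⟨τ, rfl⟩ := exists_triangle_eq_of_isNClique (hs.of_map_embedding (inlEmbedding t))
      exact ⟨Sum.inl τ, triangle_inl τ⟩
    · obtain ⟨w, hw, hnew⟩ := not_subset.mp hold
      rcases w with u | ⟨τ, c, g, p⟩
      · exact absurd (mem_map_of_mem _ (mem_univ u)) hnew
      · exact ⟨Sum.inr (τ, c, g), eq_triangle_of_inr_mem hs hw⟩

theorem inr_mem_triangle_iff {t : ℕ} {τ : KochTri m t} {c : Fin 3} {g : Fin m} {p : Fin 2}
    {σ : KochTri m (t+1)} : Sum.inr (τ, c, g, p) ∈ triangle σ ↔ σ = Sum.inr (τ, c, g) := by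
  rcases σ with σ | ⟨σ, c', g'⟩
  · simp only [triangle_inl, mem_map, reduceCtorEq, iff_false, not_exists, not_and]
    exact fun _ _ => Sum.inl_ne_inr
  · rw [triangle_inr]
    fin_cases p <;> simp [and_comm, eq_comm]

theorem triangle_injective : ∀ {t}, Function.Injective (triangle (m := m) (t := t))
  | 0, _, _, _ => rfl
  | _ + 1, .inl _, .inl _, h => by
      rw [triangle_inl, triangle_inl] at h
      exact congrArg _ (triangle_injective (map_injective _ h))
  | _ + 1, .inr _, _, h =>
      ((inr_mem_triangle_iff (p := 0)).mp (h ▸ inr_mem_triangle_iff.mpr rfl)).symm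
  | _ + 1, _, .inr _, h => (inr_mem_triangle_iff (p := 0)).mp (h ▸ inr_mem_triangle_iff.mpr rfl)

theorem cliqueFinset_three_eq_image_triangle {t : ℕ} :
    (KochGraph m t).cliqueFinset 3 = univ.image triangle := by
  ext s
  simp only [SimpleGraph.mem_cliqueFinset_iff, mem_image, mem_univ, true_and]
  exact ⟨exists_triangle_eq_of_isNClique, fun ⟨τ, hτ⟩ => hτ ▸ isNClique_triangle τ⟩

theorem card_kochTri : ∀ t, Fintype.card (KochTri m t) = (3 * m + 1) ^ t
  | 0 => rfl
  | t + 1 => by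
    change Fintype.card (KochTri m t ⊕ (KochTri m t × Fin 3 × Fin m)) = _
    rw [Fintype.card_sum, Fintype.card_prod, Fintype.card_prod, Fintype.card_fin, Fintype.card_fin,
      card_kochTri t, pow_succ]
    ring

end KochGraph

theorem koch_card_triangles_general (m t : ℕ) :
    ((KochGraph m t).cliqueFinset 3).card = (3 * m + 1) ^ t := by
  rw [KochGraph.cliqueFinset_three_eq_image_triangle,
    card_image_of_injective _ KochGraph.triangle_injective, card_univ, KochGraph.card_kochTri]

/-- For all integers m ≥ 1 and t ≥ 0, the number of triangles (sets of three
mutually adjacent vertices, i.e. 3-cliques) in the Koch network `K_{m,t}` equals `(3m+1)^t`. -/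
theorem koch_card_triangles (m t : ℕ) (hm : 1 ≤ m) :
    ((KochGraph m t).cliqueFinset 3).card = (3 * m + 1) ^ t :=
  koch_card_triangles_general m t
end

section
/- For all integers m ≥ 1 and 1 ≤ i ≤ t, if v is a vertex of the Koch network K_{m,t} added at step i, then the set of vertices u ≠ v such that every path from u to an initial vertex passes through v (the offspring of v) has cardinality exactly [2(3m+1)^{t-i} − 2]/3. -/
/-!
The father map turns the vertices of `K_{m,t}` into a forest rooted at the initial vertices, and
the offspring of `v` are exactly its proper descendants in this forest. Indeed, descendants of `v`
only see each other and `v` (every triangle through a proper descendant of `v` was created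
inside the subtree of `v`), while from any other vertex the chain of fathers leads to an initial
vertex without meeting `v`. Counting the subtree is then a recursion in `t`: each step attaches
`2m` new vertices at each of the `P` corner slots lying in the subtree, and multiplies `P` by
`3m + 1`, so `P = (3m+1)^(t-i)` and the subtree has `1 + 2m(1 + (3m+1) + ⋯ + (3m+1)^(t-i-1))`
vertices.
-/

theorem SimpleGraph.Walk.mem_support_of_separates {V : Type*} {G : SimpleGraph V} {S : Set V}
    {v : V} (hS : ∀ a ∈ S, ∀ b, G.Adj a b → b ∈ S ∨ b = v) :
    ∀ {u w : V} (p : G.Walk u w), u ∈ S → w ∉ S → v ∈ p.support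
  | _, _, .nil, hu, hw => absurd hu hw
  | _, _, .cons hab p, hu, hw => by
    rw [support_cons]
    rcases hS _ hu _ hab with hb | rfl
    · exact List.mem_cons_of_mem _ (p.mem_support_of_separates hS hb hw)
    · exact List.mem_cons_of_mem _ p.start_mem_support

theorem Nat.card_subtype_sum {α β : Type*} [Finite α] [Finite β] (p : α ⊕ β → Prop) :
    Nat.card {x // p x} = Nat.card {a // p (.inl a)} + Nat.card {b // p (Sum.inr b)} := by
  rw [Nat.card_congr (Equiv.subtypeSum (p := p)), Nat.card_sum]

theorem Nat.card_subtype_sum_prod {α β γ : Type*} [Finite α] [Finite β] [Finite γ]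
    (p : (α ⊕ β) × γ → Prop) :
    Nat.card {x // p x} = Nat.card {a : α × γ // p (.inl a.1, a.2)} +
      Nat.card {b : β × γ // p (.inr b.1, b.2)} := by
  rw [Nat.card_congr (Equiv.sumProdDistrib α β γ).subtypeEquivOfSubtype', Nat.card_subtype_sum]
  rfl

theorem Nat.card_subtype_eq_one {α : Type*} {p : α → Prop} (a : α) (h : ∀ x, p x ↔ x = a) :
    Nat.card {x // p x} = 1 :=
  Nat.card_eq_one_iff_exists.mpr ⟨⟨a, (h a).mpr rfl⟩, fun y => Subtype.ext ((h y).mp y.2)⟩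

/-- `KochDescendsFrom m t u v`: `v` lies on the chain of fathers of `u`, `u = v` included. -/
def KochDescendsFrom (m : ℕ) : ∀ t, KochVertex m t → KochVertex m t → Prop
  | 0, u, v => u = v
  | t+1, Sum.inl u, Sum.inl v => KochDescendsFrom m t u v
  | t+1, Sum.inr (τ, c, _, _), Sum.inl v => KochDescendsFrom m t (KochCorner m t τ c) v
  | _+1, Sum.inl _, Sum.inr _ => False
  | _+1, Sum.inr x, Sum.inr y => x = y

section Koch

variable {m : ℕ}

theorem kochBirth_le : ∀ {t} (v : KochVertex m t), KochBirth m t v ≤ t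
  | 0, _ => le_rfl
  | t+1, Sum.inl v => (kochBirth_le (t := t) v).trans t.le_succ
  | _+1, Sum.inr _ => le_rfl

theorem kochBirth_father_lt : ∀ {t} (u : KochVertex m t), KochBirth m t u ≠ 0 →
    KochBirth m t (KochFather m t u) < KochBirth m t u
  | 0, _, h => absurd rfl h
  | t+1, Sum.inl u, h => kochBirth_father_lt (t := t) u h
  | t+1, Sum.inr (τ, c, _, _), _ => Nat.lt_succ_of_le (kochBirth_le (KochCorner m t τ c))

theorem kochGraph_adj_inl {t} {a b : KochVertex m t} (h : (KochGraph m t).Adj a b) :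
    (KochGraph m (t+1)).Adj (Sum.inl a) (Sum.inl b) := by
  obtain ⟨hne, τ, i, j, rfl, rfl⟩ := h
  exact ⟨fun h => hne (Sum.inl.inj h), Sum.inl τ, i, j, rfl, rfl⟩

theorem kochGraph_adj_father : ∀ {t} (u : KochVertex m t), KochBirth m t u ≠ 0 →
    (KochGraph m t).Adj u (KochFather m t u)
  | 0, _, h => absurd rfl h
  | t+1, Sum.inl u, h => kochGraph_adj_inl (kochGraph_adj_father (t := t) u h)
  | t+1, Sum.inr (τ, c, g, p), _ =>
    ⟨Sum.inr_ne_inl, Sum.inr (τ, c, g), p.succ, 0, by fin_cases p <;> rfl, rfl⟩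

theorem kochDescendsFrom_refl : ∀ {t} (v : KochVertex m t), KochDescendsFrom m t v v
  | 0, _ => rfl
  | t+1, Sum.inl v => kochDescendsFrom_refl (t := t) v
  | _+1, Sum.inr _ => rfl

theorem kochDescendsFrom_inr_iff {t} {u : KochVertex m (t+1)} {x} :
    KochDescendsFrom m (t+1) u (Sum.inr x) ↔ u = Sum.inr x := by
  rcases u with u | y
  · simp [KochDescendsFrom]
  · exact ⟨congrArg Sum.inr, Sum.inr.inj⟩

theorem kochBirth_le_of_descendsFrom : ∀ {t} {u v : KochVertex m t},
    KochDescendsFrom m t u v → KochBirth m t v ≤ KochBirth m t u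
  | 0, _, _, _ => le_rfl
  | t+1, Sum.inl _, Sum.inl _, h => kochBirth_le_of_descendsFrom (t := t) h
  | t+1, Sum.inr _, Sum.inl _, h =>
    ((kochBirth_le_of_descendsFrom (t := t) h).trans (kochBirth_le _)).trans t.le_succ
  | _+1, Sum.inr _, Sum.inr _, _ => le_rfl

theorem kochDescendsFrom_of_father : ∀ {t} {u v : KochVertex m t}, KochBirth m t u ≠ 0 →
    KochDescendsFrom m t (KochFather m t u) v → KochDescendsFrom m t u v
  | 0, _, _, h, _ => absurd rfl h
  | t+1, Sum.inl _, Sum.inl _, hu, h => kochDescendsFrom_of_father (t := t) hu h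
  | _+1, Sum.inr _, Sum.inl _, _, h => h
  | _+1, Sum.inl _, Sum.inr _, _, h => absurd (kochDescendsFrom_inr_iff.mp h) Sum.inl_ne_inr
  | _+1, Sum.inr _, Sum.inr _, _, h => absurd (kochDescendsFrom_inr_iff.mp h) Sum.inl_ne_inr

theorem kochDescendsFrom_corner : ∀ {t} (τ : KochTri m t) (j j' : Fin 3) (v : KochVertex m t),
    KochDescendsFrom m t (KochCorner m t τ j) v → KochCorner m t τ j ≠ v →
    KochDescendsFrom m t (KochCorner m t τ j') v
  | 0, _, _, _, _, h, hne => absurd h hne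
  | t+1, Sum.inl τ, j, j', Sum.inl v, h, hne =>
    kochDescendsFrom_corner (t := t) τ j j' v h (fun h' => hne (congrArg Sum.inl h'))
  | _+1, τ, j, _, Sum.inr _, h, hne => absurd (kochDescendsFrom_inr_iff.mp h) hne
  | t+1, Sum.inr (τ, c, g), j, j', Sum.inl v, h, hne => by
    have hc : KochDescendsFrom m t (KochCorner m t τ c) v := by
      fin_cases j <;> exact h
    fin_cases j' <;> exact hc

theorem koch_exists_walk_to_initial_avoiding {t} {v : KochVertex m t} (u : KochVertex m t)
    (hu : ¬ KochDescendsFrom m t u v) :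
    ∃ w, KochBirth m t w = 0 ∧ ∃ p : (KochGraph m t).Walk u w, v ∉ p.support := by
  have huv : v ≠ u := fun h => hu (h ▸ kochDescendsFrom_refl v)
  by_cases h0 : KochBirth m t u = 0
  · exact ⟨u, h0, .nil, by simpa using huv⟩
  · obtain ⟨w, hw, p, hp⟩ := koch_exists_walk_to_initial_avoiding (KochFather m t u)
      (mt (kochDescendsFrom_of_father h0) hu)
    exact ⟨w, hw, .cons (kochGraph_adj_father u h0) p, by simp [huv, hp]⟩
termination_by KochBirth m t u
decreasing_by exact kochBirth_father_lt u h0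

theorem koch_offspring_eq {t} {v : KochVertex m t} (hv : KochBirth m t v ≠ 0) :
    {u : KochVertex m t | u ≠ v ∧ ∀ w : KochVertex m t, KochBirth m t w = 0 →
        ∀ p : (KochGraph m t).Walk u w, p.IsPath → v ∈ p.support}
      = {u | KochDescendsFrom m t u v} \ {v} := by
  ext u
  simp only [Set.mem_ofPred_eq, Set.mem_sdiff, Set.mem_singleton_iff]
  constructor
  · rintro ⟨hne, hpaths⟩
    refine ⟨by_contra fun hu => ?_, hne⟩
    obtain ⟨w, hw, p, hp⟩ := koch_exists_walk_to_initial_avoiding u hu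
    exact hp (p.support_bypass_subset_support (hpaths w hw _ p.bypass_isPath))
  · rintro ⟨hu, hne⟩
    refine ⟨hne, fun w hw p _ =>
      p.mem_support_of_separates (S := {x | KochDescendsFrom m t x v} \ {v}) ?_ ⟨hu, hne⟩ ?_⟩
    · rintro a ⟨ha, hav⟩ b ⟨-, τ, i, j, rfl, rfl⟩
      by_cases hb : KochCorner m t τ j = v
      · exact .inr hb
      · exact .inl ⟨kochDescendsFrom_corner τ i j v ha hav, hb⟩
    · intro hw'
      have := kochBirth_le_of_descendsFrom hw'.1
      omega

variable (m) in
noncomputable def kochSubtreeCard (t : ℕ) (v : KochVertex m t) : ℕ :=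
  Nat.card {u // KochDescendsFrom m t u v}

variable (m) in
noncomputable def kochSubtreeSlots (t : ℕ) (v : KochVertex m t) : ℕ :=
  Nat.card {q : KochTri m t × Fin 3 // KochDescendsFrom m t (KochCorner m t q.1 q.2) v}

theorem kochSubtreeCard_inl {t} (v : KochVertex m t) :
    kochSubtreeCard m (t+1) (Sum.inl v) =
      kochSubtreeCard m t v + kochSubtreeSlots m t v * (m * 2) := by
  have e : {b : KochTri m t × Fin 3 × Fin m × Fin 2 //
        KochDescendsFrom m (t+1) (Sum.inr b) (Sum.inl v)} ≃
      {q : KochTri m t × Fin 3 // KochDescendsFrom m t (KochCorner m t q.1 q.2) v} ×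
        (Fin m × Fin 2) :=
    ((Equiv.prodAssoc _ _ _).symm.subtypeEquiv fun ⟨_, _, _, _⟩ => Iff.rfl).trans
      Equiv.prodSubtypeFstEquivSubtypeProd
  refine (Nat.card_subtype_sum (α := KochVertex m t) (β := KochTri m t × Fin 3 × Fin m × Fin 2)
    _).trans ?_
  rw [Nat.card_congr e, Nat.card_prod]
  simp [kochSubtreeCard, kochSubtreeSlots, KochDescendsFrom]

theorem kochSubtreeSlots_inl {t} (v : KochVertex m t) :
    kochSubtreeSlots m (t+1) (Sum.inl v) = kochSubtreeSlots m t v * (3 * m + 1) := by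
  have e : {b : (KochTri m t × Fin 3 × Fin m) × Fin 3 //
        KochDescendsFrom m (t+1) (KochCorner m (t+1) (Sum.inr b.1) b.2) (Sum.inl v)} ≃
      {q : KochTri m t × Fin 3 // KochDescendsFrom m t (KochCorner m t q.1 q.2) v} ×
        (Fin m × Fin 3) :=
    -- regroup `((τ, c, g), j)` as `((τ, c), (g, j))`
    (((Equiv.prodAssoc _ _ _).trans ((Equiv.refl _).prodCongr (Equiv.prodAssoc _ _ _))).trans
      (Equiv.prodAssoc _ _ _).symm |>.subtypeEquiv fun ⟨⟨_, _, _⟩, j⟩ => by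
        fin_cases j <;> exact Iff.rfl).trans Equiv.prodSubtypeFstEquivSubtypeProd
  calc kochSubtreeSlots m (t+1) (Sum.inl v)
      = kochSubtreeSlots m t v + Nat.card {b : (KochTri m t × Fin 3 × Fin m) × Fin 3 //
          KochDescendsFrom m (t+1) (KochCorner m (t+1) (Sum.inr b.1) b.2) (Sum.inl v)} :=
        Nat.card_subtype_sum_prod _
    _ = kochSubtreeSlots m t v * (3 * m + 1) := by
        rw [Nat.card_congr e, Nat.card_prod]
        simp only [kochSubtreeSlots, Nat.card_eq_fintype_card, Fintype.card_prod,
          Fintype.card_fin]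
        ring

theorem kochSubtreeCard_inr {t} (x : KochTri m t × Fin 3 × Fin m × Fin 2) :
    kochSubtreeCard m (t+1) (Sum.inr x) = 1 :=
  Nat.card_subtype_eq_one _ fun _ => kochDescendsFrom_inr_iff

theorem kochCorner_eq_inr_iff {t} {τ₀ c₀ g₀ p₀} :
    ∀ {τ : KochTri m (t+1)} {j : Fin 3},
      KochCorner m (t+1) τ j = Sum.inr (τ₀, c₀, g₀, p₀) ↔ (τ, j) = (Sum.inr (τ₀, c₀, g₀), p₀.succ)
  | Sum.inl _, _ => iff_of_false Sum.inl_ne_inr fun h => Sum.inl_ne_inr (congrArg Prod.fst h)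
  | Sum.inr (τ, c, g), j => by
    refine ⟨fun h => ?_, fun h => by cases h; fin_cases p₀ <;> rfl⟩
    fin_cases j
    · exact absurd h Sum.inl_ne_inr
    all_goals cases Sum.inr.inj h; rfl

theorem kochSubtreeSlots_inr {t} (x : KochTri m t × Fin 3 × Fin m × Fin 2) :
    kochSubtreeSlots m (t+1) (Sum.inr x) = 1 :=
  Nat.card_subtype_eq_one _ fun _ => kochDescendsFrom_inr_iff.trans kochCorner_eq_inr_iff

theorem kochSubtree_closed_form : ∀ {t} (v : KochVertex m t), KochBirth m t v ≠ 0 →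
    kochSubtreeSlots m t v = (3 * m + 1) ^ (t - KochBirth m t v) ∧
      3 * kochSubtreeCard m t v = 2 * (3 * m + 1) ^ (t - KochBirth m t v) + 1
  | 0, _, h => absurd rfl h
  | t+1, Sum.inr x, _ => by
    simp [kochSubtreeSlots_inr, kochSubtreeCard_inr, KochBirth]
  | t+1, Sum.inl v, h => by
    obtain ⟨hP, hS⟩ := kochSubtree_closed_form (t := t) v h
    have ht : t + 1 - KochBirth m t v = t - KochBirth m t v + 1 := by
      have := kochBirth_le v
      omega
    change kochSubtreeSlots m (t+1) (Sum.inl v) = (3 * m + 1) ^ (t + 1 - KochBirth m t v) ∧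
      3 * kochSubtreeCard m (t+1) (Sum.inl v) = 2 * (3 * m + 1) ^ (t + 1 - KochBirth m t v) + 1
    rw [kochSubtreeSlots_inl, kochSubtreeCard_inl, ht, pow_succ, hP]
    exact ⟨rfl, by linarith⟩

end Koch

theorem koch_offspring_count_general (m i t : ℕ) (hi : 1 ≤ i)
    (v : KochVertex m t) (hv : KochBirth m t v = i) :
    {u : KochVertex m t | u ≠ v ∧ ∀ w : KochVertex m t, KochBirth m t w = 0 →
        ∀ p : (KochGraph m t).Walk u w, p.IsPath → v ∈ p.support}.ncard
      = (2 * (3 * m + 1) ^ (t - i) - 2) / 3 := by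
  subst hv
  have hv0 : KochBirth m t v ≠ 0 := by omega
  rw [koch_offspring_eq hv0, Set.ncard_sdiff_singleton_of_mem
    (s := {u | KochDescendsFrom m t u v}) (kochDescendsFrom_refl v), ← Nat.card_coe_set_eq]
  have hS := (kochSubtree_closed_form v hv0).2
  change kochSubtreeCard m t v - 1 = _
  generalize (3 * m + 1) ^ (t - KochBirth m t v) = K at hS ⊢
  omega

/-- For all integers m ≥ 1 and 1 ≤ i ≤ t, if v is a vertex of `K_{m,t}` added at
step i, then the set of vertices u ≠ v such that every path from u to an initial vertex passes
through v has cardinality exactly `[2(3m+1)^(t-i) − 2]/3`. -/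
theorem koch_offspring_count (m i t : ℕ) (hm : 1 ≤ m) (hi : 1 ≤ i) (hit : i ≤ t)
    (v : KochVertex m t) (hv : KochBirth m t v = i) :
    {u : KochVertex m t | u ≠ v ∧ ∀ w : KochVertex m t, KochBirth m t w = 0 →
        ∀ p : (KochGraph m t).Walk u w, p.IsPath → v ∈ p.support}.ncard
      = (2 * (3 * m + 1) ^ (t - i) - 2) / 3 :=
  koch_offspring_count_general m i t hi v hv
end
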